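/- If x(t) = exp(γ t A) x₀ with A the adjacency matrix of K_N, γ > 0, and S := Σ_j x₀_j ≠ 0, then the normalized order parameter (1/N)|Σ_j x_j(t)/|x_j(t)||, using the phases arg(x_j(t)), converges to 1 as t → ∞. -/

import Mathlib

/-!
For the complete graph `A = J - I`, so `A` acts as `N - 1` on constant vectors and as `-1` on
zero-sum vectors. Splitting `x₀` into its mean `c = S / N` and a zero-sum part gives
`x(t) = e^{γ(N-1)t} (c + e^{-γNt} (x₀ - c))`. The phases `z / |z|` do not see the positive
factor, and the bracket tends to the constant vector `c ≠ 0`, at which all phases agree.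
-/

open NormedSpace Filter Topology Matrix

section MatrixExp

attribute [local instance] Matrix.linftyOpNormedRing Matrix.linftyOpNormedAlgebra

theorem Matrix.exp_mulVec_of_mulVec_eq_smul {𝕂 n : Type*} [RCLike 𝕂] [Fintype n]
    [DecidableEq n] {M : Matrix n n 𝕂} {v : n → 𝕂} {μ : 𝕂} (h : M *ᵥ v = μ • v) :
    exp M *ᵥ v = exp μ • v := by
  have hpow : ∀ k : ℕ, M ^ k *ᵥ v = μ ^ k • v := by
    intro k
    induction k with
    | zero => simp
    | succ k ih => rw [pow_succ', ← mulVec_mulVec, ih, mulVec_smul, h, smul_smul, ← pow_succ]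
  have hM : HasSum (fun k : ℕ => ((k.factorial⁻¹ : 𝕂) • M ^ k) *ᵥ v) (exp M *ᵥ v) :=
    (exp_series_hasSum_exp' (𝕂 := 𝕂) M).map (mulVec.addMonoidHomLeft v)
      (continuous_id.matrix_mulVec continuous_const)
  have hμ : HasSum (fun k : ℕ => ((k.factorial⁻¹ : 𝕂) • μ ^ k) • v) (exp μ • v) :=
    (exp_series_hasSum_exp' (𝕂 := 𝕂) μ).smul_const v
  refine hM.unique (hμ.congr_fun fun k => ?_)
  rw [smul_mulVec, hpow, smul_smul, smul_eq_mul]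

end MatrixExp

section CompleteGraph

variable {n : Type*} [Fintype n] [DecidableEq n]

theorem completeAdj_mulVec_apply {R : Type*} [Ring R] {A : Matrix n n R}
    (hA : ∀ i j, A i j = if i = j then 0 else 1) (u : n → R) (i : n) :
    (A *ᵥ u) i = ∑ j, u j - u i := by
  simp only [mulVec, dotProduct, hA, ite_mul, zero_mul, one_mul]
  rw [Finset.sum_ite, Finset.sum_const_zero, zero_add, Finset.filter_ne,
    Finset.sum_erase_eq_sub (Finset.mem_univ i)]

theorem completeAdj_mulVec_const {R : Type*} [Ring R] {A : Matrix n n R}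
    (hA : ∀ i j, A i j = if i = j then 0 else 1) (c : R) :
    A *ᵥ (fun _ => c) = ((Fintype.card n : R) - 1) • fun _ => c := by
  ext i
  simp [completeAdj_mulVec_apply hA, sub_mul]

theorem completeAdj_mulVec_of_sum_eq_zero {R : Type*} [Ring R] {A : Matrix n n R}
    (hA : ∀ i j, A i j = if i = j then 0 else 1) {v : n → R} (hv : ∑ j, v j = 0) :
    A *ᵥ v = (-1 : R) • v := by
  ext i
  simp [completeAdj_mulVec_apply hA, hv]

theorem exp_smul_completeAdj_mulVec {𝕂 : Type*} [RCLike 𝕂] {A : Matrix n n 𝕂}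
    (hA : ∀ i j, A i j = if i = j then 0 else 1) (s : 𝕂) {x₀ : n → 𝕂} {c : 𝕂}
    (hc : ∑ j, (x₀ j - c) = 0) :
    exp (s • A) *ᵥ x₀ =
      exp (s * (Fintype.card n - 1)) • (fun _ => c) + exp (-s) • (x₀ - fun _ => c) := by
  conv_lhs => rw [← add_sub_cancel (fun _ => c) x₀, mulVec_add]
  rw [exp_mulVec_of_mulVec_eq_smul (by rw [smul_mulVec, completeAdj_mulVec_const hA, smul_smul]),
    exp_mulVec_of_mulVec_eq_smul
      (by rw [smul_mulVec, completeAdj_mulVec_of_sum_eq_zero hA (v := x₀ - fun _ => c) hc,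
        smul_smul, mul_neg_one])]

theorem exp_ofReal_smul_completeAdj_mulVec {A : Matrix n n ℂ}
    (hA : ∀ i j, A i j = if i = j then 0 else 1) (s : ℝ) {x₀ : n → ℂ} {c : ℂ}
    (hc : ∑ j, (x₀ j - c) = 0) :
    exp ((s : ℂ) • A) *ᵥ x₀ = Real.exp (s * (Fintype.card n - 1)) •
      ((fun _ => c) + Real.exp (-(s * Fintype.card n)) • (x₀ - fun _ => c)) := by
  ext j
  simp only [exp_smul_completeAdj_mulVec hA _ hc, ← Complex.exp_eq_exp_ℂ, Pi.add_apply,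
    Pi.smul_apply, smul_eq_mul, Pi.sub_apply, Complex.real_smul, Complex.ofReal_exp,
    Complex.ofReal_neg, Complex.ofReal_mul, Complex.ofReal_natCast, Complex.ofReal_sub,
    Complex.ofReal_one, smul_add, add_right_inj]
  rw [← mul_assoc, ← Complex.exp_add]
  ring_nf

end CompleteGraph

theorem Complex.real_smul_div_norm {r : ℝ} (hr : 0 < r) (z : ℂ) :
    r • z / (‖r • z‖ : ℂ) = z / (‖z‖ : ℂ) := by
  rw [norm_smul, Real.norm_of_nonneg hr.le, Complex.real_smul, Complex.ofReal_mul,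
    mul_div_mul_left _ _ (Complex.ofReal_ne_zero.mpr hr.ne')]

section OrderParameter

variable {n : Type*} [Fintype n]

noncomputable def orderParameter (z : n → ℂ) : ℝ :=
  ‖(1 / Fintype.card n : ℂ) * ∑ j, z j / (‖z j‖ : ℂ)‖

theorem orderParameter_smul {r : ℝ} (hr : 0 < r) (z : n → ℂ) :
    orderParameter (r • z) = orderParameter z := by
  simp only [orderParameter, Pi.smul_apply, Complex.real_smul_div_norm hr]

theorem continuousAt_orderParameter {z : n → ℂ} (hz : ∀ j, z j ≠ 0) :
    ContinuousAt orderParameter z := by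
  have hphase : ∀ j, ContinuousAt (fun w : n → ℂ => w j / (‖w j‖ : ℂ)) z := fun j =>
    (continuous_apply j).continuousAt.div
      (Complex.continuous_ofReal.comp (continuous_norm.comp (continuous_apply j))).continuousAt
      (by simpa using hz j)
  unfold orderParameter
  fun_prop

theorem orderParameter_const [Nonempty n] {c : ℂ} (hc : c ≠ 0) :
    orderParameter (fun _ : n => c) = 1 := by
  have : (Fintype.card n : ℂ) ≠ 0 := by simp
  simp [orderParameter, field, hc]

theorem tendsto_orderParameter_of_tendsto_const [Nonempty n] {α : Type*} {l : Filter α}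
    {u : α → n → ℂ} {c : ℂ} (hu : Tendsto u l (𝓝 fun _ => c)) (hc : c ≠ 0) :
    Tendsto (fun a => orderParameter (u a)) l (𝓝 1) := by
  rw [← orderParameter_const (n := n) hc]
  exact (continuousAt_orderParameter fun _ => hc).tendsto.comp hu

end OrderParameter

theorem stmt_14_general (N : ℕ) (A : Matrix (Fin N) (Fin N) ℂ)
    (hA : ∀ i j : Fin N, A i j = if i = j then 0 else 1)
    (γ : ℝ) (hγ : 0 < γ) (x₀ : Fin N → ℂ)
    (hS : (∑ j, x₀ j) ≠ 0)
    (x : ℝ → Fin N → ℂ)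
    (hx : ∀ t : ℝ, x t = (NormedSpace.exp (((γ : ℂ) * t) • A)).mulVec x₀) :
    Filter.Tendsto
      (fun t : ℝ =>
        ‖(1 / N : ℂ) * ∑ j, x t j / ((‖x t j‖ : ℝ) : ℂ)‖)
      Filter.atTop (nhds 1) := by
  have hN : 0 < N := Nat.pos_of_ne_zero (by rintro rfl; simp at hS)
  have : Nonempty (Fin N) := ⟨⟨0, hN⟩⟩
  set c : ℂ := (∑ j, x₀ j) / N
  have hc : c ≠ 0 := div_ne_zero hS (by exact_mod_cast hN.ne')
  have hmean : ∑ j, (x₀ j - c) = 0 := by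
    simp [c, Finset.sum_sub_distrib, mul_div_cancel₀, hN.ne']
  let u : ℝ → Fin N → ℂ := fun t =>
    (fun _ => c) + Real.exp (-(γ * t * N)) • (x₀ - fun _ => c)
  have hxu : ∀ t, x t = Real.exp (γ * t * (N - 1)) • u t := fun t => by
    rw [hx, ← Complex.ofReal_mul, exp_ofReal_smul_completeAdj_mulVec hA (γ * t) hmean,
      Fintype.card_fin]
  have hu : Tendsto u atTop (𝓝 fun _ => c) := by
    have he : Tendsto (fun t : ℝ => Real.exp (-(γ * t * N))) atTop (𝓝 0) :=
      Real.tendsto_exp_atBot.comp (tendsto_neg_atTop_atBot.comp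
        ((tendsto_id.const_mul_atTop hγ).atTop_mul_const (by positivity)))
    simpa [u] using
      (tendsto_const_nhds (x := fun _ : Fin N => c)).add (he.smul_const (x₀ - fun _ => c))
  refine (tendsto_orderParameter_of_tendsto_const hu hc).congr fun t => ?_
  rw [← orderParameter_smul (Real.exp_pos (γ * t * (N - 1))), ← hxu, orderParameter,
    Fintype.card_fin]

theorem stmt_14 (N : ℕ) (hN : 2 ≤ N) (A : Matrix (Fin N) (Fin N) ℂ)
    (hA : ∀ i j : Fin N, A i j = if i = j then 0 else 1)
    (γ : ℝ) (hγ : 0 < γ) (x₀ : Fin N → ℂ)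
    (hx₀ : ∀ j, x₀ j ≠ 0) (hS : (∑ j, x₀ j) ≠ 0)
    (x : ℝ → Fin N → ℂ)
    (hx : ∀ t : ℝ, x t = (NormedSpace.exp (((γ : ℂ) * t) • A)).mulVec x₀) :
    Filter.Tendsto
      (fun t : ℝ =>
        ‖(1 / N : ℂ) * ∑ j, x t j / ((‖x t j‖ : ℝ) : ℂ)‖)
      Filter.atTop (nhds 1) :=
  stmt_14_general N A hA γ hγ x₀ hS x hx
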